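/- The Kepler-Heisenberg potential is harmonic for the Heisenberg sub-Laplacian away from the origin: let U : ℝ³ \ {0} → ℝ be U(x, y, z) = −(1/(8π))·((x² + y²)² + 16z²)^(−1/2), and for a smooth function f on ℝ³ \ {0} define Xf = ∂f/∂x − (1/2)·y·∂f/∂z and Yf = ∂f/∂y + (1/2)·x·∂f/∂z. Then X(X U) + Y(Y U) = 0 at every point of ℝ³ \ {0}. -/
import Mathlib

/-- The Kepler–Heisenberg potential `U = -(1/(8π)) ((x²+y²)² + 16z²)^{-1/2}` on `ℝ³`,
with coordinates `(x, y, z) = (p 0, p 1, p 2)`. -/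
noncomputable def Upot (p : Fin 3 → ℝ) : ℝ :=
  -(1/(8*Real.pi)) * (((p 0)^2 + (p 1)^2)^2 + 16 * (p 2)^2) ^ (-(1/2) : ℝ)

/-- The Heisenberg vector field `X = ∂/∂x - (1/2) y ∂/∂z` acting on functions. -/
noncomputable def Xop (f : (Fin 3 → ℝ) → ℝ) (p : Fin 3 → ℝ) : ℝ :=
  fderiv ℝ f p (Pi.single 0 1) - (1/2) * p 1 * fderiv ℝ f p (Pi.single 2 1)

/-- The Heisenberg vector field `Y = ∂/∂y + (1/2) x ∂/∂z` acting on functions. -/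
noncomputable def Yop (f : (Fin 3 → ℝ) → ℝ) (p : Fin 3 → ℝ) : ℝ :=
  fderiv ℝ f p (Pi.single 1 1) + (1/2) * p 0 * fderiv ℝ f p (Pi.single 2 1)

noncomputable def Qf (p : Fin 3 → ℝ) : ℝ := ((p 0)^2 + (p 1)^2)^2 + 16 * (p 2)^2

lemma Qf_pos (p : Fin 3 → ℝ) (hp : p ≠ 0) : 0 < Qf p := by
  have hQ0 : (0:ℝ) ≤ Qf p := by unfold Qf; positivity
  rcases lt_or_eq_of_le hQ0 with h | h
  · exact h
  · exfalso; apply hp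
    have hz : Qf p = 0 := h.symm
    unfold Qf at hz
    have hs : (p 0)^2 + (p 1)^2 = 0 := by
      nlinarith [sq_nonneg (p 2), sq_nonneg ((p 0)^2 + (p 1)^2), sq_nonneg (p 0), sq_nonneg (p 1)]
    have h0 : p 0 = 0 := by nlinarith [sq_nonneg (p 0), sq_nonneg (p 1)]
    have h1 : p 1 = 0 := by nlinarith [sq_nonneg (p 0), sq_nonneg (p 1)]
    have h2 : p 2 = 0 := by nlinarith [sq_nonneg (p 2)]
    funext i; fin_cases i <;> simpa

lemma fderiv_Upot_apply (p : Fin 3 → ℝ) (hp : p ≠ 0) (v : Fin 3 → ℝ) :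
    fderiv ℝ Upot p v = (1/(16*Real.pi)) * (Qf p) ^ (-(3:ℝ)/2) *
      (4*(p 0)*((p 0)^2+(p 1)^2)*(v 0) + 4*(p 1)*((p 0)^2+(p 1)^2)*(v 1) + 32*(p 2)*(v 2)) := by
  have hne : Qf p ≠ 0 := (Qf_pos p hp).ne'
  have h0 := hasFDerivAt_apply (𝕜 := ℝ) 0 p
  have h1 := hasFDerivAt_apply (𝕜 := ℝ) 1 p
  have h2 := hasFDerivAt_apply (𝕜 := ℝ) 2 p
  have h0s := (hasDerivAt_pow 2 (p 0)).comp_hasFDerivAt p h0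
  have h1s := (hasDerivAt_pow 2 (p 1)).comp_hasFDerivAt p h1
  have h2s := (hasDerivAt_pow 2 (p 2)).comp_hasFDerivAt p h2
  have hr := h0s.add h1s
  have hrs := (hasDerivAt_pow 2 ((p 0)^2 + (p 1)^2)).comp_hasFDerivAt p hr
  have hQ := hrs.add (h2s.const_mul 16)
  have hU : HasFDerivAt Upot _ p := (hQ.rpow_const (Or.inl hne)).const_mul (-(1/(8*Real.pi)))
  rw [hU.fderiv]
  have he : (-(1/2) : ℝ) - 1 = -(3:ℝ)/2 := by norm_num
  simp [he, Qf, ContinuousLinearMap.proj]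
  ring

noncomputable def Fx (p : Fin 3 → ℝ) : ℝ :=
  (1/(16*Real.pi)) * ((Qf p) ^ (-(3:ℝ)/2) * (4*(p 0)*((p 0)^2+(p 1)^2) - 16*(p 1)*(p 2)))

noncomputable def Fy (p : Fin 3 → ℝ) : ℝ :=
  (1/(16*Real.pi)) * ((Qf p) ^ (-(3:ℝ)/2) * (4*(p 1)*((p 0)^2+(p 1)^2) + 16*(p 0)*(p 2)))

lemma Xop_Upot_eq (p : Fin 3 → ℝ) (hp : p ≠ 0) : Xop Upot p = Fx p := by
  unfold Xop Fx
  rw [fderiv_Upot_apply p hp, fderiv_Upot_apply p hp]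
  simp [Pi.single_apply]
  ring

lemma Yop_Upot_eq (p : Fin 3 → ℝ) (hp : p ≠ 0) : Yop Upot p = Fy p := by
  unfold Yop Fy
  rw [fderiv_Upot_apply p hp, fderiv_Upot_apply p hp]
  simp [Pi.single_apply]
  ring

lemma fderiv_Fx_apply (p : Fin 3 → ℝ) (hp : p ≠ 0) (v : Fin 3 → ℝ) :
    fderiv ℝ Fx p v = (1/(16*Real.pi)) *
      ((-(3:ℝ)/2 * (Qf p) ^ (-(5:ℝ)/2) *
          (4*(p 0)*((p 0)^2+(p 1)^2)*(v 0) + 4*(p 1)*((p 0)^2+(p 1)^2)*(v 1) + 32*(p 2)*(v 2))) *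
        (4*(p 0)*((p 0)^2+(p 1)^2) - 16*(p 1)*(p 2)) +
       (Qf p) ^ (-(3:ℝ)/2) *
        ((12*(p 0)^2 + 4*(p 1)^2)*(v 0) + (8*(p 0)*(p 1) - 16*(p 2))*(v 1) - 16*(p 1)*(v 2))) := by
  have hne : Qf p ≠ 0 := (Qf_pos p hp).ne'
  have h0 := hasFDerivAt_apply (𝕜 := ℝ) 0 p
  have h1 := hasFDerivAt_apply (𝕜 := ℝ) 1 p
  have h2 := hasFDerivAt_apply (𝕜 := ℝ) 2 p
  have h0s := (hasDerivAt_pow 2 (p 0)).comp_hasFDerivAt p h0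
  have h1s := (hasDerivAt_pow 2 (p 1)).comp_hasFDerivAt p h1
  have h2s := (hasDerivAt_pow 2 (p 2)).comp_hasFDerivAt p h2
  have hr := h0s.add h1s
  have hrs := (hasDerivAt_pow 2 ((p 0)^2 + (p 1)^2)).comp_hasFDerivAt p hr
  have hQ := hrs.add (h2s.const_mul 16)
  have hP := ((h0.const_mul 4).mul hr).sub ((h1.const_mul 16).mul h2)
  have hF : HasFDerivAt Fx _ p :=
    ((hQ.rpow_const (Or.inl hne)).mul hP).const_mul (1/(16*Real.pi))
  rw [hF.fderiv]
  have he : (-(3:ℝ)/2) - 1 = -(5:ℝ)/2 := by norm_num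
  simp [he, Qf, ContinuousLinearMap.proj]
  ring

lemma fderiv_Fy_apply (p : Fin 3 → ℝ) (hp : p ≠ 0) (v : Fin 3 → ℝ) :
    fderiv ℝ Fy p v = (1/(16*Real.pi)) *
      ((-(3:ℝ)/2 * (Qf p) ^ (-(5:ℝ)/2) *
          (4*(p 0)*((p 0)^2+(p 1)^2)*(v 0) + 4*(p 1)*((p 0)^2+(p 1)^2)*(v 1) + 32*(p 2)*(v 2))) *
        (4*(p 1)*((p 0)^2+(p 1)^2) + 16*(p 0)*(p 2)) +
       (Qf p) ^ (-(3:ℝ)/2) *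
        ((8*(p 0)*(p 1) + 16*(p 2))*(v 0) + (4*(p 0)^2 + 12*(p 1)^2)*(v 1) + 16*(p 0)*(v 2))) := by
  have hne : Qf p ≠ 0 := (Qf_pos p hp).ne'
  have h0 := hasFDerivAt_apply (𝕜 := ℝ) 0 p
  have h1 := hasFDerivAt_apply (𝕜 := ℝ) 1 p
  have h2 := hasFDerivAt_apply (𝕜 := ℝ) 2 p
  have h0s := (hasDerivAt_pow 2 (p 0)).comp_hasFDerivAt p h0
  have h1s := (hasDerivAt_pow 2 (p 1)).comp_hasFDerivAt p h1
  have h2s := (hasDerivAt_pow 2 (p 2)).comp_hasFDerivAt p h2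
  have hr := h0s.add h1s
  have hrs := (hasDerivAt_pow 2 ((p 0)^2 + (p 1)^2)).comp_hasFDerivAt p hr
  have hQ := hrs.add (h2s.const_mul 16)
  have hP := ((h1.const_mul 4).mul hr).add ((h0.const_mul 16).mul h2)
  have hF : HasFDerivAt Fy _ p :=
    ((hQ.rpow_const (Or.inl hne)).mul hP).const_mul (1/(16*Real.pi))
  rw [hF.fderiv]
  have he : (-(3:ℝ)/2) - 1 = -(5:ℝ)/2 := by norm_num
  simp [he, Qf, ContinuousLinearMap.proj]
  ring

lemma XU_ev (p : Fin 3 → ℝ) (hp : p ≠ 0) : fderiv ℝ (Xop Upot) p = fderiv ℝ Fx p := by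
  apply Filter.EventuallyEq.fderiv_eq
  filter_upwards [isOpen_compl_singleton.mem_nhds (by simpa using hp)] with q hq
  exact Xop_Upot_eq q hq

lemma YU_ev (p : Fin 3 → ℝ) (hp : p ≠ 0) : fderiv ℝ (Yop Upot) p = fderiv ℝ Fy p := by
  apply Filter.EventuallyEq.fderiv_eq
  filter_upwards [isOpen_compl_singleton.mem_nhds (by simpa using hp)] with q hq
  exact Yop_Upot_eq q hq

/-- The Kepler–Heisenberg potential is harmonic for the Heisenberg sub-Laplacian
`Δ_H = X² + Y²` away from the origin: `X(X U) + Y(Y U) = 0` on `ℝ³ \ {0}`. -/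
theorem kh_potential_subharmonic (p : Fin 3 → ℝ) (hp : p ≠ 0) :
    Xop (Xop Upot) p + Yop (Yop Upot) p = 0 := by
  have hX : Xop (Xop Upot) p = fderiv ℝ (Xop Upot) p (Pi.single 0 1) -
      (1/2) * p 1 * fderiv ℝ (Xop Upot) p (Pi.single 2 1) := rfl
  have hY : Yop (Yop Upot) p = fderiv ℝ (Yop Upot) p (Pi.single 1 1) +
      (1/2) * p 0 * fderiv ℝ (Yop Upot) p (Pi.single 2 1) := rfl
  rw [hX, hY, XU_ev p hp, YU_ev p hp,
    fderiv_Fx_apply p hp, fderiv_Fx_apply p hp,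
    fderiv_Fy_apply p hp, fderiv_Fy_apply p hp]
  have hpos := Qf_pos p hp
  have hsplit : (Qf p) ^ (-(3:ℝ)/2) = (Qf p) ^ (-(5:ℝ)/2) * Qf p := by
    rw [show (-(3:ℝ)/2) = -(5:ℝ)/2 + 1 by norm_num, Real.rpow_add hpos, Real.rpow_one]
  rw [hsplit]
  simp [Pi.single_apply]
  unfold Qf
  ring
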